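/- Given the shift data and operational data of a fully polarized LG-algebra, let ≈ be the relation on P ⊕ N with A ≈ B iff A ≤π B and B ≤π A. Then ≈ is an equivalence relation, ≤π descends to a partial order ≤ on the quotient (P ⊕ N)/≈, the induced operations ⊗', ⊕', \', /', ⊘', ⦸' descend to well-defined operations on the quotient, and the quotient with these operations is a Lambek-Grishin algebra: for all equivalence classes [A], [B], [C], it holds that [B] ≤ [A] \ [C] iff [A] ⊗ [B] ≤ [C] iff [A] ≤ [C] / [B], and [C] ⊘ [B] ≤ [A] iff [C] ≤ [A] ⊕ [B] iff [A] ⦸ [C] ≤ [B]. -/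

import Mathlib

/-- A weakening relation from an ordered set `(α, leA)` to an ordered set `(β, leB)`. -/
def IsWeakeningBetween {α β : Type*} (leA : α → α → Prop) (leB : β → β → Prop)
    (R : α → β → Prop) : Prop :=
  ∀ ⦃a' a b b'⦄, leA a' a → R a b → leB b b' → R a' b'

/-- The shift data of a fully polarized LG-algebra: four posets `P`, `Ṗ` (`Pd`),
`N`, `Ṅ` (`Nd`), adjoint pairs of monotone shift maps `↑ ⊣ ⫞` and `↿ ⊣ ↓`, and
three weakening relations `⪌ʳ` (`gtr : P → Ṗ`), `⪯` (`prec : P → N`) and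
`⪅ᵇ` (`lesb : Ṅ → N`) with `↑p ⪅ᵇ n ↔ p ⪯ n ↔ p ⪌ʳ ↓n`. -/
structure ShiftData (P Pd N Nd : Type*) [PartialOrder P] [PartialOrder Pd]
    [PartialOrder N] [PartialOrder Nd] where
  /-- `↑ : P → Ṅ` -/
  up : P → Nd
  /-- `⫞ : Ṅ → P` -/
  corner : Nd → P
  /-- `↿ : Ṗ → N` -/
  upl : Pd → N
  /-- `↓ : N → Ṗ` -/
  down : N → Pd
  up_mono : Monotone up
  corner_mono : Monotone corner
  upl_mono : Monotone upl
  down_mono : Monotone down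
  /-- the adjunction `↑ ⊣ ⫞` -/
  up_adj : ∀ (p : P) (nd : Nd), up p ≤ nd ↔ p ≤ corner nd
  /-- the adjunction `↿ ⊣ ↓` -/
  upl_adj : ∀ (pd : Pd) (n : N), upl pd ≤ n ↔ pd ≤ down n
  /-- `⪌ʳ : P → Ṗ` -/
  gtr : P → Pd → Prop
  /-- `⪯ : P → N` -/
  prec : P → N → Prop
  /-- `⪅ᵇ : Ṅ → N` -/
  lesb : Nd → N → Prop
  gtr_wk : IsWeakeningBetween (· ≤ ·) (· ≤ ·) gtr
  prec_wk : IsWeakeningBetween (· ≤ ·) (· ≤ ·) prec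
  lesb_wk : IsWeakeningBetween (· ≤ ·) (· ≤ ·) lesb
  /-- `↑p ⪅ᵇ n ↔ p ⪯ n` -/
  lesb_up_iff_prec : ∀ (p : P) (n : N), lesb (up p) n ↔ prec p n
  /-- `p ⪯ n ↔ p ⪌ʳ ↓n` -/
  prec_iff_gtr_down : ∀ (p : P) (n : N), prec p n ↔ gtr p (down n)

variable {P Pd N Nd : Type*} [PartialOrder P] [PartialOrder Pd]
  [PartialOrder N] [PartialOrder Nd]

/-- The represented relation `⪌ : P → Ṅ`, `p ⪌ ṅ ↔ ↑p ⩿_Ṅ ṅ`. -/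
def ShiftData.gles (S : ShiftData P Pd N Nd) (p : P) (nd : Nd) : Prop := S.up p ≤ nd

/-- The represented relation `⪷ : Ṗ → N`, `ṗ ⪷ n ↔ ṗ ⩿_Ṗ ↓n`. -/
def ShiftData.pres (S : ShiftData P Pd N Nd) (pd : Pd) (n : N) : Prop := pd ≤ S.down n

/-- The relation `⸧ : P̊ → N̊` with `P̊ = P ⊕ Ṗ` and `N̊ = N ⊕ Ṅ`, defined by cases
from `⪯`, `⪌` and `⪷` (and never holding between two shifted elements). -/
def ShiftData.tack (S : ShiftData P Pd N Nd) : P ⊕ Pd → N ⊕ Nd → Prop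
  | Sum.inl p, Sum.inl n => S.prec p n
  | Sum.inl p, Sum.inr nd => S.gles p nd
  | Sum.inr pd, Sum.inl n => S.pres pd n
  | Sum.inr _, Sum.inr _ => False

/-- The relation `≤π` on `P ⊕ N`: `p ≤π q ↔ p ⪌ ↑q`, `p ≤π n ↔ p ⪯ n`,
`m ≤π n ↔ ↓m ⪷ n`, and no element of `N` is below an element of `P`. -/
def ShiftData.lepi (S : ShiftData P Pd N Nd) : P ⊕ N → P ⊕ N → Prop
  | Sum.inl p, Sum.inl q => S.gles p (S.up q)
  | Sum.inl p, Sum.inr n => S.prec p n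
  | Sum.inr m, Sum.inr n => S.pres (S.down m) n
  | Sum.inr _, Sum.inl _ => False

/-- A fully polarized LG-algebra: shift data together with the six heterogeneous
operations `⊗, \, /, ⊕, ⊘, ⦸` satisfying the residuation laws w.r.t. `⸧`. -/
structure FPLG (P Pd N Nd : Type*) [PartialOrder P] [PartialOrder Pd]
    [PartialOrder N] [PartialOrder Nd] extends ShiftData P Pd N Nd where
  /-- `⊗ : P̊ × P̊ → P` -/
  tens : P ⊕ Pd → P ⊕ Pd → P
  /-- `\ : P̊ × N̊ → N` -/
  lres : P ⊕ Pd → N ⊕ Nd → N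
  /-- `/ : N̊ × P̊ → N` -/
  rres : N ⊕ Nd → P ⊕ Pd → N
  /-- `⊕ : N̊ × N̊ → N` -/
  coten : N ⊕ Nd → N ⊕ Nd → N
  /-- `⊘ : P̊ × N̊ → P` -/
  lsub : P ⊕ Pd → N ⊕ Nd → P
  /-- `⦸ : N̊ × P̊ → P` -/
  rsub : N ⊕ Nd → P ⊕ Pd → P
  /-- `y ⸧ x \ z ↔ x ⊗ y ⸧ z` -/
  resid_left : ∀ (x y : P ⊕ Pd) (z : N ⊕ Nd),
    toShiftData.tack y (Sum.inl (lres x z)) ↔ toShiftData.tack (Sum.inl (tens x y)) z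
  /-- `x ⊗ y ⸧ z ↔ x ⸧ z / y` -/
  resid_right : ∀ (x y : P ⊕ Pd) (z : N ⊕ Nd),
    toShiftData.tack (Sum.inl (tens x y)) z ↔ toShiftData.tack x (Sum.inl (rres z y))
  /-- `x ⊘ w ⸧ z ↔ x ⸧ z ⊕ w` -/
  coresid_left : ∀ (x : P ⊕ Pd) (z w : N ⊕ Nd),
    toShiftData.tack (Sum.inl (lsub x w)) z ↔ toShiftData.tack x (Sum.inl (coten z w))
  /-- `x ⸧ z ⊕ w ↔ z ⦸ x ⸧ w` -/
  coresid_right : ∀ (x : P ⊕ Pd) (z w : N ⊕ Nd),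
    toShiftData.tack x (Sum.inl (coten z w)) ↔ toShiftData.tack (Sum.inl (rsub z x)) w

/-- `A⁺ ∈ P̊`: the positive representative of `A ∈ P ⊕ N`. -/
def FPLG.pos (F : FPLG P Pd N Nd) : P ⊕ N → P ⊕ Pd
  | Sum.inl p => Sum.inl p
  | Sum.inr n => Sum.inr (F.down n)

/-- `A⁻ ∈ N̊`: the negative representative of `A ∈ P ⊕ N`. -/
def FPLG.neg (F : FPLG P Pd N Nd) : P ⊕ N → N ⊕ Nd
  | Sum.inl p => Sum.inr (F.up p)
  | Sum.inr n => Sum.inl n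

/-- The induced operation `A ⊗' B = A⁺ ⊗ B⁺` on `P ⊕ N`. -/
def FPLG.tens' (F : FPLG P Pd N Nd) (A B : P ⊕ N) : P ⊕ N :=
  Sum.inl (F.tens (F.pos A) (F.pos B))

/-- The induced operation `A \' B = A⁺ \ B⁻` on `P ⊕ N`. -/
def FPLG.lres' (F : FPLG P Pd N Nd) (A B : P ⊕ N) : P ⊕ N :=
  Sum.inr (F.lres (F.pos A) (F.neg B))

/-- The induced operation `A /' B = A⁻ / B⁺` on `P ⊕ N`. -/
def FPLG.rres' (F : FPLG P Pd N Nd) (A B : P ⊕ N) : P ⊕ N :=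
  Sum.inr (F.rres (F.neg A) (F.pos B))

/-- The induced operation `A ⊕' B = A⁻ ⊕ B⁻` on `P ⊕ N`. -/
def FPLG.coten' (F : FPLG P Pd N Nd) (A B : P ⊕ N) : P ⊕ N :=
  Sum.inr (F.coten (F.neg A) (F.neg B))

/-- The induced operation `A ⊘' B = A⁺ ⊘ B⁻` on `P ⊕ N`. -/
def FPLG.lsub' (F : FPLG P Pd N Nd) (A B : P ⊕ N) : P ⊕ N :=
  Sum.inl (F.lsub (F.pos A) (F.neg B))

/-- The induced operation `A ⦸' B = A⁻ ⦸ B⁺` on `P ⊕ N`. -/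
def FPLG.rsub' (F : FPLG P Pd N Nd) (A B : P ⊕ N) : P ⊕ N :=
  Sum.inl (F.rsub (F.neg A) (F.pos B))

/-- The relation `≈` on `P ⊕ N`: `A ≈ B ↔ A ≤π B ∧ B ≤π A`. -/
def FPLG.equivRel (F : FPLG P Pd N Nd) (A B : P ⊕ N) : Prop :=
  F.toShiftData.lepi A B ∧ F.toShiftData.lepi B A

/-! `≤π` is `⸧` read between representatives, `A ≤π B ↔ A⁺ ⸧ B⁻`, so the (co)residuation
laws of the FP.LG-algebra become residuation laws for the induced operations on `P ⊕ N` with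
respect to the preorder `≤π`; transitivity of `≤π` across the two polarities is where the
weakening relations and the identities `↑p ⪅ᵇ n ↔ p ⪯ n ↔ p ⪌ʳ ↓n` enter. An operation with
residuals on both sides is monotone or antitone in each argument, hence respects
`≈ = AntisymmRel (≤π)`, and everything descends to the quotient. The laws for `⊕, ⊘, ⦸` are
those of a residuated triple for the reversed preorder, so one argument serves both halves of
the LG-algebra. -/

open Function Relator

section Preorder

variable {α : Type*} {r : α → α → Prop} [IsPreorder α r]

variable (r) in
def antisymmQuotRel : Quot (AntisymmRel r) → Quot (AntisymmRel r) → Prop :=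
  Quot.lift₂ r (fun _ _ _ h => propext ⟨(trans_of r · h.1), (trans_of r · h.2)⟩)
    (fun _ _ _ h => propext ⟨trans_of r h.2, trans_of r h.1⟩)

theorem antisymmQuotRel_refl : Reflexive (antisymmQuotRel r) := by
  rintro ⟨a⟩
  exact refl_of r a

theorem antisymmQuotRel_trans : Transitive (antisymmQuotRel r) := by
  rintro ⟨a⟩ ⟨b⟩ ⟨c⟩
  exact trans_of r

theorem antisymmQuotRel_antisymm : AntiSymmetric (antisymmQuotRel r) := by
  rintro ⟨a⟩ ⟨b⟩ hab hba
  exact Quot.sound ⟨hab, hba⟩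

variable (r) in
def antisymmQuotMap₂ (f : α → α → α)
    (hf : (AntisymmRel r ⇒ AntisymmRel r ⇒ AntisymmRel r) f f) :
    Quot (AntisymmRel r) → Quot (AntisymmRel r) → Quot (AntisymmRel r) :=
  Quot.map₂ f (fun a _ _ h => hf (.refl r a) h) (fun _ _ b h => hf h (.refl r b))

end Preorder

def IsResiduated {α : Type*} (r : α → α → Prop) (mul ldiv rdiv : α → α → α) : Prop :=
  ∀ a b c, (r b (ldiv a c) ↔ r (mul a b) c) ∧ (r (mul a b) c ↔ r a (rdiv c b))

namespace IsResiduated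

variable {α : Type*} {r : α → α → Prop} [IsPreorder α r] {mul ldiv rdiv : α → α → α}
  {a a' b b' c c' : α}

theorem mul_rel_mul (h : IsResiduated r mul ldiv rdiv) (ha : r a a') (hb : r b b') :
    r (mul a b) (mul a' b') := by
  have left : r (mul a b) (mul a' b) :=
    (h a b _).2.2 (trans_of r ha ((h a' b _).2.1 (refl _)))
  have right : r (mul a' b) (mul a' b') :=
    (h a' b _).1.1 (trans_of r hb ((h a' b' _).1.2 (refl _)))
  exact trans_of r left right

theorem ldiv_rel_ldiv (h : IsResiduated r mul ldiv rdiv) (ha : r a' a) (hc : r c c') :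
    r (ldiv a c) (ldiv a' c') :=
  (h a' _ c').1.2 <|
    trans_of r (h.mul_rel_mul ha (refl _)) (trans_of r ((h a _ c).1.1 (refl _)) hc)

theorem rdiv_rel_rdiv (h : IsResiduated r mul ldiv rdiv) (hc : r c c') (hb : r b' b) :
    r (rdiv c b) (rdiv c' b') :=
  (h _ b' c').2.1 <|
    trans_of r (h.mul_rel_mul (refl _) hb) (trans_of r ((h _ b c).2.2 (refl _)) hc)

theorem mul_congr (h : IsResiduated r mul ldiv rdiv) :
    (AntisymmRel r ⇒ AntisymmRel r ⇒ AntisymmRel r) mul mul :=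
  fun _ _ ha _ _ hb => ⟨h.mul_rel_mul ha.1 hb.1, h.mul_rel_mul ha.2 hb.2⟩

theorem ldiv_congr (h : IsResiduated r mul ldiv rdiv) :
    (AntisymmRel r ⇒ AntisymmRel r ⇒ AntisymmRel r) ldiv ldiv :=
  fun _ _ ha _ _ hc => ⟨h.ldiv_rel_ldiv ha.2 hc.1, h.ldiv_rel_ldiv ha.1 hc.2⟩

theorem rdiv_congr (h : IsResiduated r mul ldiv rdiv) :
    (AntisymmRel r ⇒ AntisymmRel r ⇒ AntisymmRel r) rdiv rdiv :=
  fun _ _ hc _ _ hb => ⟨h.rdiv_rel_rdiv hc.1 hb.2, h.rdiv_rel_rdiv hc.2 hb.1⟩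

end IsResiduated

namespace ShiftData

variable (S : ShiftData P Pd N Nd)

theorem lepi_refl : ∀ A, S.lepi A A
  | .inl p => le_refl (S.up p)
  | .inr n => le_refl (S.down n)

theorem lepi_trans : ∀ {A B C}, S.lepi A B → S.lepi B C → S.lepi A C
  | .inl _, .inl _, .inl _, hAB, hBC => le_trans hAB hBC
  | .inl p, .inl q, .inr n, hAB, hBC =>
    (S.lesb_up_iff_prec p n).1 (S.lesb_wk hAB ((S.lesb_up_iff_prec q n).2 hBC) le_rfl)
  | .inl p, .inr m, .inr n, hAB, hBC =>
    (S.prec_iff_gtr_down p n).2 (S.gtr_wk le_rfl ((S.prec_iff_gtr_down p m).1 hAB) hBC)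
  | .inr _, .inr _, .inr _, hAB, hBC => le_trans hAB hBC
  | .inl _, .inr _, .inl _, _, hBC => hBC.elim
  | .inr _, .inl _, _, hAB, _ => hAB.elim
  | .inr _, .inr _, .inl _, _, hBC => hBC.elim

instance : IsPreorder (P ⊕ N) S.lepi where
  refl := S.lepi_refl
  trans _ _ _ := S.lepi_trans

end ShiftData

namespace FPLG

variable (F : FPLG P Pd N Nd)

theorem equivRel_eq_antisymmRel : F.equivRel = AntisymmRel F.lepi := rfl

theorem lepi_iff_tack_pos_neg (A B : P ⊕ N) : F.lepi A B ↔ F.tack (F.pos A) (F.neg B) := by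
  cases A <;> cases B <;> rfl

theorem isResiduated_tens' : IsResiduated F.lepi F.tens' F.lres' F.rres' := by
  intro A B C
  simp only [lepi_iff_tack_pos_neg]
  exact ⟨F.resid_left _ _ _, F.resid_right _ _ _⟩

theorem isResiduated_coten' : IsResiduated (swap F.lepi) F.coten' F.rsub' F.lsub' := by
  intro A B C
  simp only [swap, lepi_iff_tack_pos_neg]
  exact ⟨(F.coresid_right _ _ _).symm, (F.coresid_left _ _ _).symm⟩

theorem coten'_congr :
    (AntisymmRel F.lepi ⇒ AntisymmRel F.lepi ⇒ AntisymmRel F.lepi) F.coten' F.coten' := by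
  simpa only [antisymmRel_swap] using F.isResiduated_coten'.mul_congr

theorem rsub'_congr :
    (AntisymmRel F.lepi ⇒ AntisymmRel F.lepi ⇒ AntisymmRel F.lepi) F.rsub' F.rsub' := by
  simpa only [antisymmRel_swap] using F.isResiduated_coten'.ldiv_congr

theorem lsub'_congr :
    (AntisymmRel F.lepi ⇒ AntisymmRel F.lepi ⇒ AntisymmRel F.lepi) F.lsub' F.lsub' := by
  simpa only [antisymmRel_swap] using F.isResiduated_coten'.rdiv_congr

end FPLG

/-- `≈` is an equivalence relation, `≤π` descends to a partial order on the quotient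
`(P ⊕ N)/≈`, the induced operations descend to well-defined operations on the quotient,
and the quotient with these operations is a Lambek-Grishin algebra. -/
theorem stmt10 (F : FPLG P Pd N Nd) :
    Equivalence F.equivRel ∧
    ∃ (le : Quot F.equivRel → Quot F.equivRel → Prop)
      (tq uq oq cq sq bq : Quot F.equivRel → Quot F.equivRel → Quot F.equivRel),
      -- `le` is the descent of `≤π` to the quotient
      (∀ A B : P ⊕ N,
        le (Quot.mk F.equivRel A) (Quot.mk F.equivRel B) ↔ F.toShiftData.lepi A B) ∧
      -- `le` is a partial order on the quotient
      Reflexive le ∧ Transitive le ∧ AntiSymmetric le ∧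
      -- the six operations descend to the quotient
      (∀ A B : P ⊕ N, tq (Quot.mk F.equivRel A) (Quot.mk F.equivRel B)
        = Quot.mk F.equivRel (F.tens' A B)) ∧
      (∀ A B : P ⊕ N, uq (Quot.mk F.equivRel A) (Quot.mk F.equivRel B)
        = Quot.mk F.equivRel (F.lres' A B)) ∧
      (∀ A B : P ⊕ N, oq (Quot.mk F.equivRel A) (Quot.mk F.equivRel B)
        = Quot.mk F.equivRel (F.rres' A B)) ∧
      (∀ A B : P ⊕ N, cq (Quot.mk F.equivRel A) (Quot.mk F.equivRel B)
        = Quot.mk F.equivRel (F.coten' A B)) ∧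
      (∀ A B : P ⊕ N, sq (Quot.mk F.equivRel A) (Quot.mk F.equivRel B)
        = Quot.mk F.equivRel (F.lsub' A B)) ∧
      (∀ A B : P ⊕ N, bq (Quot.mk F.equivRel A) (Quot.mk F.equivRel B)
        = Quot.mk F.equivRel (F.rsub' A B)) ∧
      -- the quotient is a Lambek-Grishin algebra
      (∀ a b c : Quot F.equivRel,
        (le b (uq a c) ↔ le (tq a b) c) ∧ (le (tq a b) c ↔ le a (oq c b))) ∧
      (∀ a b c : Quot F.equivRel,
        (le (sq c b) a ↔ le c (cq a b)) ∧ (le c (cq a b) ↔ le (bq a c) b)) := by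
  rw [F.equivRel_eq_antisymmRel]
  refine ⟨(AntisymmRel.setoid _ F.lepi).iseqv, antisymmQuotRel F.lepi,
    antisymmQuotMap₂ F.lepi F.tens' F.isResiduated_tens'.mul_congr,
    antisymmQuotMap₂ F.lepi F.lres' F.isResiduated_tens'.ldiv_congr,
    antisymmQuotMap₂ F.lepi F.rres' F.isResiduated_tens'.rdiv_congr,
    antisymmQuotMap₂ F.lepi F.coten' F.coten'_congr,
    antisymmQuotMap₂ F.lepi F.lsub' F.lsub'_congr,
    antisymmQuotMap₂ F.lepi F.rsub' F.rsub'_congr,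
    fun _ _ => Iff.rfl, antisymmQuotRel_refl, antisymmQuotRel_trans, antisymmQuotRel_antisymm,
    fun _ _ => rfl, fun _ _ => rfl, fun _ _ => rfl, fun _ _ => rfl, fun _ _ => rfl,
    fun _ _ => rfl, ?_, ?_⟩
  · rintro ⟨A⟩ ⟨B⟩ ⟨C⟩
    exact F.isResiduated_tens' A B C
  · rintro ⟨A⟩ ⟨B⟩ ⟨C⟩
    obtain ⟨rsub'_iff, coten'_iff⟩ := F.isResiduated_coten' A B C
    exact ⟨coten'_iff.symm, rsub'_iff.symm⟩
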